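/- For the curvature tensor R of Lemma 2.1 (with R¹ = 0 and R² of constant sectional curvature +1) and a spacelike unit vector X with u-component of unit Euclidean length reduced to u_1 = 1, the kernel of J(X) is Span{X, V_1, ..., V_s, T_1} and has dimension s + 2, while the image of J(X) is Span{C_{2b}V_b − T_2, ..., C_{sb}V_b − T_s, V_2, ..., V_s} of dimension 2(s−1). -/

import Mathlib

open scoped BigOperators

/-- Basis of `ℝ^{3s}`: `(0, a) = U_a`, `(1, a) = V_a`, `(2, a) = T_a`. -/
abbrev BasisIdx (s : ℕ) := Fin 3 × Fin s

/-- The basis vectors `U_a`, `V_a`, `T_a` of `ℝ^{3s}`. -/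
def Uvec {s : ℕ} (a : Fin s) : BasisIdx s → ℝ := Pi.single ((0 : Fin 3), a) 1
def Vvec {s : ℕ} (a : Fin s) : BasisIdx s → ℝ := Pi.single ((1 : Fin 3), a) 1
def Tvec {s : ℕ} (a : Fin s) : BasisIdx s → ℝ := Pi.single ((2 : Fin 3), a) 1

/-- Components of the metric of Lemma 2.1: `g(U_a,U_b) = g_{ab}`,
`g(U_a,V_b) = g(V_b,U_a) = δ_{ab}`, `g(T_a,T_b) = -δ_{ab}`, all else zero. -/
def Gmat {s : ℕ} (gm : Fin s → Fin s → ℝ) : BasisIdx s → BasisIdx s → ℝ :=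
  fun x y =>
    if x.1 = 0 ∧ y.1 = 0 then gm x.2 y.2
    else if (x.1 = 0 ∧ y.1 = 1) ∨ (x.1 = 1 ∧ y.1 = 0) then (if x.2 = y.2 then 1 else 0)
    else if x.1 = 2 ∧ y.1 = 2 then (if x.2 = y.2 then (-1 : ℝ) else 0)
    else 0

/-- The bilinear form determined by the metric components. -/
def gBil {s : ℕ} (gm : Fin s → Fin s → ℝ) (X Y : BasisIdx s → ℝ) : ℝ :=
  ∑ p, ∑ q, X p * Gmat gm p q * Y q

/-- The quadrilinear extension of a component tensor to vectors. -/
def ext {s : ℕ} (F : BasisIdx s → BasisIdx s → BasisIdx s → BasisIdx s → ℝ)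
    (x y z w : BasisIdx s → ℝ) : ℝ :=
  ∑ p, ∑ q, ∑ r, ∑ t, x p * y q * z r * w t * F p q r t

/-- A (component-level) algebraic curvature tensor. -/
def IsACT {ι : Type*} (F : ι → ι → ι → ι → ℝ) : Prop :=
  (∀ x y z w, F x y z w = - F y x z w) ∧
  (∀ x y z w, F x y z w = F z w x y) ∧
  (∀ x y z w, F x y z w + F y z x w + F z x y w = 0)

/-- `R²_{abcd} = δ_{ad}δ_{bc} - δ_{ac}δ_{bd}`, constant sectional curvature `+1`. -/
def R2const (s : ℕ) : Fin s → Fin s → Fin s → Fin s → ℝ :=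
  fun a b c d =>
    (if a = d then (1 : ℝ) else 0) * (if b = c then (1 : ℝ) else 0) -
      (if a = c then (1 : ℝ) else 0) * (if b = d then (1 : ℝ) else 0)

/-- The tensor of Lemma 2.1: `R(U_a,U_b,U_c,U_d) = R¹_{abcd}`, components with
exactly one `T` index equal `R²_{abcd}` (replacing the `T` index by the
corresponding `U` index), all else zero. -/
def bigR {s : ℕ} (R1 R2 : Fin s → Fin s → Fin s → Fin s → ℝ) :
    BasisIdx s → BasisIdx s → BasisIdx s → BasisIdx s → ℝ :=
  fun x y z w =>
    if x.1 = 0 ∧ y.1 = 0 ∧ z.1 = 0 ∧ w.1 = 0 then R1 x.2 y.2 z.2 w.2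
    else if (x.1 = 2 ∧ y.1 = 0 ∧ z.1 = 0 ∧ w.1 = 0) ∨ (x.1 = 0 ∧ y.1 = 2 ∧ z.1 = 0 ∧ w.1 = 0) ∨
            (x.1 = 0 ∧ y.1 = 0 ∧ z.1 = 2 ∧ w.1 = 0) ∨ (x.1 = 0 ∧ y.1 = 0 ∧ z.1 = 0 ∧ w.1 = 2)
      then R2 x.2 y.2 z.2 w.2
    else 0

/-! The tensor `R` is antisymmetric in its first two slots, so `J(X)X = 0`, and it vanishes as
soon as its first slot is a `V`, so `J(X)V_a = 0`. Because the `U`-part of `X` is `U_1`, the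
only surviving components are `R(T_a, U_1, U_1, U_d) = R²_{a11d}`, which give `J(X)T_1 = 0`,
`J(X)T_a = V_a` and `J(X)U_a = C_{ab}V_b - T_a` for `a ≠ 1`. So the proposed kernel and image
lie in `ker J(X)` and `im J(X)`. Both families are linearly independent (read off the
`U_1`-coordinate, respectively the `T_a`-coordinates with `a ≠ 1`, then the `V`- and
`T_1`-coordinates); their dimensions `s + 2` and `2(s - 1)` add up to `3s`, and rank–nullity
forces equality. -/

section LinearAlgebra

variable {R K M N ι κ : Type*}

lemma linearIndependent_sumElim_of_map [Ring R] [AddCommGroup M] [Module R M] [AddCommGroup N]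
    [Module R N] [Fintype ι] [Fintype κ] {u : ι → M} {w : κ → M} (φ : M →ₗ[R] N)
    (hu : LinearIndependent R (φ ∘ u)) (hw : LinearIndependent R w) (hφw : ∀ j, φ (w j) = 0) :
    LinearIndependent R (Sum.elim u w) := by
  rw [Fintype.linearIndependent_iff] at hu hw ⊢
  intro c hc
  rw [Fintype.sum_sum_type] at hc
  have hcu : ∀ i, c (Sum.inl i) = 0 := hu _ <| by
    simpa [hφw] using congrArg φ hc
  have hcw : ∀ j, c (Sum.inr j) = 0 := hw _ <| by
    simpa [hcu] using hc
  rintro (i | j)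
  exacts [hcu i, hcw j]

lemma LinearMap.ker_eq_and_range_eq_of_finrank_add_eq [Field K] [AddCommGroup M] [Module K M]
    [AddCommGroup N] [Module K N] [FiniteDimensional K M] [FiniteDimensional K N]
    (f : M →ₗ[K] N) {P : Submodule K M} {Q : Submodule K N} (hP : P ≤ ker f) (hQ : Q ≤ range f)
    (h : Module.finrank K P + Module.finrank K Q = Module.finrank K M) :
    ker f = P ∧ range f = Q := by
  have hf := f.finrank_range_add_finrank_ker
  have hPk := Submodule.finrank_mono hP
  have hQr := Submodule.finrank_mono hQ
  exact ⟨(Submodule.eq_of_le_of_finrank_le hP (by omega)).symm,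
    (Submodule.eq_of_le_of_finrank_le hQ (by omega)).symm⟩

end LinearAlgebra

section Metric

variable {s : ℕ} (gm : Fin s → Fin s → ℝ)

lemma gBil_Uvec_right (W : BasisIdx s → ℝ) (d : Fin s) :
    gBil gm W (Uvec d) = ∑ a, W (0, a) * gm a d + W (1, d) := by
  simp [gBil, Uvec, Gmat, Pi.single_apply, Fintype.sum_prod_type, Fin.sum_univ_three]

lemma gBil_Vvec_right (W : BasisIdx s → ℝ) (d : Fin s) : gBil gm W (Vvec d) = W (0, d) := by
  simp [gBil, Vvec, Gmat, Pi.single_apply, Fintype.sum_prod_type]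

lemma gBil_Tvec_right (W : BasisIdx s → ℝ) (d : Fin s) : gBil gm W (Tvec d) = -W (2, d) := by
  simp [gBil, Tvec, Gmat, Pi.single_apply, Fintype.sum_prod_type]

lemma gBil_Vvec_left (a : Fin s) (z : BasisIdx s → ℝ) : gBil gm (Vvec a) z = z (0, a) := by
  simp [gBil, Vvec, Gmat, Pi.single_apply, Fintype.sum_prod_type, Fin.sum_univ_three]

lemma gBil_zero_left (z : BasisIdx s → ℝ) : gBil gm 0 z = 0 := by
  simp [gBil]

variable {gm}

lemma eq_of_forall_gBil_eq {W W' : BasisIdx s → ℝ} (h : ∀ z, gBil gm W z = gBil gm W' z) :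
    W = W' := by
  have hU : ∀ d, W (0, d) = W' (0, d) := fun d => by
    simpa only [gBil_Vvec_right] using h (Vvec d)
  have hV : ∀ d, W (1, d) = W' (1, d) := fun d => by
    simpa only [gBil_Uvec_right, hU, add_right_inj] using h (Uvec d)
  have hT : ∀ d, W (2, d) = W' (2, d) := fun d => by
    simpa only [gBil_Tvec_right, neg_inj] using h (Tvec d)
  funext ⟨k, d⟩
  fin_cases k
  exacts [hU d, hV d, hT d]

end Metric

section Curvature

variable {s : ℕ}

lemma R2const_antisymm (a b c d : Fin s) : R2const s a b c d = -R2const s b a c d := by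
  unfold R2const; ring

lemma R2const_apply_diag (a b d : Fin s) :
    R2const s a b b d = if a = b then 0 else if a = d then 1 else 0 := by
  unfold R2const; split_ifs <;> simp_all

lemma bigR_antisymm {R1 R2 : Fin s → Fin s → Fin s → Fin s → ℝ}
    (h1 : ∀ a b c d, R1 a b c d = -R1 b a c d) (h2 : ∀ a b c d, R2 a b c d = -R2 b a c d)
    (p q r t : BasisIdx s) : bigR R1 R2 p q r t = -bigR R1 R2 q p r t := by
  obtain ⟨i, a⟩ := p; obtain ⟨j, b⟩ := q
  fin_cases i <;> fin_cases j <;> simp [bigR] <;> split_ifs <;> simp [h1 a b, h2 a b]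

lemma ext_self_left {F : BasisIdx s → BasisIdx s → BasisIdx s → BasisIdx s → ℝ}
    (hF : ∀ p q r t, F p q r t = -F q p r t) (x z w : BasisIdx s → ℝ) : ext F x x z w = 0 := by
  have h : ext F x x z w = -ext F x x z w :=
    calc ext F x x z w = ∑ p, ∑ q, -∑ r, ∑ t, x q * x p * z r * w t * F q p r t := by
          unfold ext
          refine Finset.sum_congr rfl fun p _ => Finset.sum_congr rfl fun q _ => ?_
          simp only [← Finset.sum_neg_distrib]
          refine Finset.sum_congr rfl fun r _ => Finset.sum_congr rfl fun t _ => ?_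
          rw [hF]; ring
      _ = -ext F x x z w := by
          rw [Finset.sum_comm]; simp only [ext, Finset.sum_neg_distrib]
  linarith

lemma ext_single_left (F : BasisIdx s → BasisIdx s → BasisIdx s → BasisIdx s → ℝ)
    (p : BasisIdx s) (y z w : BasisIdx s → ℝ) :
    ext F (Pi.single p 1) y z w = ∑ q, ∑ r, ∑ t, y q * z r * w t * F p q r t := by
  unfold ext
  rw [Fintype.sum_eq_single p fun p' hp' => by simp [hp']]
  simp only [Pi.single_eq_same, one_mul]

variable (R1 R2 : Fin s → Fin s → Fin s → Fin s → ℝ) (y z w : BasisIdx s → ℝ)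

lemma ext_bigR_Vvec_left (a : Fin s) : ext (bigR R1 R2) (Vvec a) y z w = 0 := by
  simp [Vvec, ext_single_left, bigR]

lemma ext_bigR_Tvec_left (a : Fin s) :
    ext (bigR R1 R2) (Tvec a) y z w =
      ∑ b, ∑ c, ∑ d, y (0, b) * z (0, c) * w (0, d) * R2 a b c d := by
  simp [Tvec, ext_single_left, bigR, Fintype.sum_prod_type, Fin.sum_univ_three]

end Curvature

lemma Uvec_add_sums_apply_zero {s : ℕ} (i : Fin s) (v t : Fin s → ℝ) (b : Fin s) :
    (Uvec i + ∑ a, v a • Vvec a + ∑ a, t a • Tvec a) (0, b) = if b = i then 1 else 0 := by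
  simp [Uvec, Vvec, Tvec, Finset.sum_apply, Pi.single_apply, eq_comm]

section Jacobi

variable {s : ℕ} {gm : Fin s → Fin s → ℝ} {X : BasisIdx s → ℝ} {J : Module.End ℝ (BasisIdx s → ℝ)}

lemma jacobi_apply_self {F : BasisIdx s → BasisIdx s → BasisIdx s → BasisIdx s → ℝ}
    (hF : ∀ p q r t, F p q r t = -F q p r t) (hJ : ∀ y z, gBil gm (J y) z = ext F y X X z) :
    J X = 0 :=
  eq_of_forall_gBil_eq fun z => by rw [hJ, ext_self_left hF, gBil_zero_left]

lemma jacobi_apply_Vvec {R1 R2 : Fin s → Fin s → Fin s → Fin s → ℝ}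
    (hJ : ∀ y z, gBil gm (J y) z = ext (bigR R1 R2) y X X z) (a : Fin s) : J (Vvec a) = 0 :=
  eq_of_forall_gBil_eq fun z => by rw [hJ, ext_bigR_Vvec_left, gBil_zero_left]

lemma jacobi_apply_Tvec {R1 : Fin s → Fin s → Fin s → Fin s → ℝ} {i : Fin s}
    (hX : ∀ b, X (0, b) = if b = i then 1 else 0)
    (hJ : ∀ y z, gBil gm (J y) z = ext (bigR R1 (R2const s)) y X X z) (a : Fin s) :
    J (Tvec a) = if a = i then 0 else Vvec a := by
  refine eq_of_forall_gBil_eq (gm := gm) fun z => ?_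
  rw [hJ, ext_bigR_Tvec_left]
  split_ifs with ha
  · simp [hX, R2const_apply_diag, ha, gBil_zero_left]
  · simp [hX, R2const_apply_diag, ha, gBil_Vvec_left]

end Jacobi

section Spans

variable {s : ℕ}

lemma finrank_span_X_Vvec_Tvec {X : BasisIdx s → ℝ} {i : Fin s} (hX : X (0, i) ≠ 0) :
    Module.finrank ℝ (Submodule.span ℝ
      ({X} ∪ Set.range (fun a : Fin s => Vvec a) ∪ {Tvec i})) = s + 2 := by
  let w : Fin s ⊕ Unit → BasisIdx s → ℝ := Sum.elim Vvec fun _ => Tvec i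
  have hw : LinearIndependent ℝ w := by
    have hinj : Function.Injective
        (Sum.elim (fun a : Fin s => ((1 : Fin 3), a)) fun _ : Unit => ((2 : Fin 3), i)) :=
      Function.Injective.sumElim (fun a b h => by simpa using h) (fun _ _ _ => rfl)
        (fun _ _ h => by simp at h)
    convert (Pi.linearIndependent_single_one (BasisIdx s) ℝ).comp _ hinj using 1
    ext (a | _) : 1 <;> rfl
  have hind : LinearIndependent ℝ (Sum.elim (fun _ : Unit => X) w) :=
    linearIndependent_sumElim_of_map (LinearMap.proj ((0 : Fin 3), i))
      (by simpa [linearIndependent_unique_iff] using hX) hw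
      (by rintro (a | _) <;> simp [w, Vvec, Tvec])
  have hrange : Set.range (Sum.elim (fun _ : Unit => X) w) =
      {X} ∪ Set.range (fun a : Fin s => Vvec a) ∪ {Tvec i} := by
    simp [w, Set.Sum.elim_range]
  rw [← hrange, finrank_span_eq_card hind]
  simp
  omega

lemma finrank_span_CV_sub_T_Vvec (C : Fin s → Fin s → ℝ) (i : Fin s) :
    Module.finrank ℝ (Submodule.span ℝ
      ({w | ∃ a : Fin s, a ≠ i ∧ w = (∑ b, C a b • Vvec b) - Tvec a} ∪
        {w | ∃ a : Fin s, a ≠ i ∧ w = Vvec a})) = 2 * (s - 1) := by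
  let u : {a // a ≠ i} → BasisIdx s → ℝ := fun a => ∑ b, C a b • Vvec b - Tvec a
  let w : {a // a ≠ i} → BasisIdx s → ℝ := fun a => Vvec a
  let φ := -LinearMap.funLeft ℝ ℝ (fun a : {a // a ≠ i} => ((2 : Fin 3), a.1))
  have hu : LinearIndependent ℝ (φ ∘ u) := by
    convert Pi.linearIndependent_single_one {a // a ≠ i} ℝ using 1
    ext a b
    simp [φ, u, Vvec, Tvec, Finset.sum_apply, Pi.single_apply, Subtype.ext_iff, eq_comm]
  have hw : LinearIndependent ℝ w :=
    (Pi.linearIndependent_single_one (BasisIdx s) ℝ).comp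
      (fun a : {a // a ≠ i} => ((1 : Fin 3), a.1)) (fun a b h => Subtype.ext (by simpa using h))
  have hind : LinearIndependent ℝ (Sum.elim u w) :=
    linearIndependent_sumElim_of_map φ hu hw fun a => by ext; simp [φ, w, Vvec]
  have hrange : Set.range (Sum.elim u w) =
      {w | ∃ a : Fin s, a ≠ i ∧ w = (∑ b, C a b • Vvec b) - Tvec a} ∪
        {w | ∃ a : Fin s, a ≠ i ∧ w = Vvec a} := by
    ext x; simp [u, w, Set.Sum.elim_range, eq_comm]
  rw [← hrange, finrank_span_eq_card hind]
  simp [Fintype.card_subtype_compl]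
  omega

end Spans

theorem stmt16_general (s : ℕ) (i1 : Fin s)
    (gm : Fin s → Fin s → ℝ)
    (v t : Fin s → ℝ) (X : BasisIdx s → ℝ)
    (hXdef : X = Uvec i1 + (∑ a, v a • Vvec a) + (∑ a, t a • Tvec a))
    (J : Module.End ℝ (BasisIdx s → ℝ))
    (hJ : ∀ y z, gBil gm (J y) z =
        ext (bigR (fun _ _ _ _ => 0) (R2const s)) y X X z)
    (C : Fin s → Fin s → ℝ)
    (hC : ∀ a, J (Uvec a) =
        (∑ b, C a b • Vvec b) - ∑ b, R2const s a i1 i1 b • Tvec b) :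
    LinearMap.ker J =
      Submodule.span ℝ ({X} ∪ Set.range (fun a : Fin s => Vvec a) ∪ {Tvec i1}) ∧
    Module.finrank ℝ (LinearMap.ker J) = s + 2 ∧
    LinearMap.range J =
      Submodule.span ℝ
        ({w | ∃ a : Fin s, a ≠ i1 ∧ w = (∑ b, C a b • Vvec b) - Tvec a} ∪
          {w | ∃ a : Fin s, a ≠ i1 ∧ w = Vvec a}) ∧
    Module.finrank ℝ (LinearMap.range J) = 2 * (s - 1) := by
  have hXU : ∀ b, X (0, b) = if b = i1 then 1 else 0 := hXdef ▸ Uvec_add_sums_apply_zero i1 v t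
  have hJT := jacobi_apply_Tvec hXU hJ
  have hker : Submodule.span ℝ ({X} ∪ Set.range (fun a : Fin s => Vvec a) ∪ {Tvec i1}) ≤
      LinearMap.ker J := by
    rw [Submodule.span_le]
    rintro w ((rfl | ⟨a, rfl⟩) | rfl)
    · exact jacobi_apply_self (bigR_antisymm (fun _ _ _ _ => neg_zero.symm) R2const_antisymm) hJ
    · exact jacobi_apply_Vvec hJ a
    · simpa using hJT i1
  have hrange : Submodule.span ℝ
      ({w | ∃ a : Fin s, a ≠ i1 ∧ w = (∑ b, C a b • Vvec b) - Tvec a} ∪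
        {w | ∃ a : Fin s, a ≠ i1 ∧ w = Vvec a}) ≤ LinearMap.range J := by
    rw [Submodule.span_le]
    rintro w (⟨a, ha, rfl⟩ | ⟨a, ha, rfl⟩)
    · exact ⟨Uvec a, by simp [hC, R2const_apply_diag, ha, ite_smul]⟩
    · exact ⟨Tvec a, by simp [hJT, ha]⟩
  have hKdim := finrank_span_X_Vvec_Tvec (X := X) (i := i1) (by simp [hXU])
  have hIdim := finrank_span_CV_sub_T_Vvec C i1
  obtain ⟨hK, hI⟩ := J.ker_eq_and_range_eq_of_finrank_add_eq hker hrange <| by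
    rw [hKdim, hIdim, Module.finrank_fintype_fun_eq_card, Fintype.card_prod, Fintype.card_fin,
      Fintype.card_fin]
    have := i1.pos
    omega
  exact ⟨hK, hK ▸ hKdim, hI, hI ▸ hIdim⟩

/-- for the curvature tensor of Lemma 2.1 with `R¹ = 0` and `R²`
of constant sectional curvature `+1`, and a spacelike unit vector `X` whose
`U`-component has been reduced to `u_1 = 1`, `u_a = 0` for `a > 1`, the kernel
of `J(X)` is `Span{X, V_1, ..., V_s, T_1}`, of dimension `s + 2`, while the
image of `J(X)` is `Span{C_{2b}V_b - T_2, ..., C_{sb}V_b - T_s, V_2, ..., V_s}`,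
of dimension `2(s-1)`.  Here `i1` denotes the first index. -/
theorem stmt16 (s : ℕ) (hs : 2 ≤ s) (i1 : Fin s) (hi1 : (i1 : ℕ) = 0)
    (gm : Fin s → Fin s → ℝ) (hgm : ∀ a b, gm a b = gm b a)
    (v t : Fin s → ℝ) (X : BasisIdx s → ℝ)
    (hXdef : X = Uvec i1 + (∑ a, v a • Vvec a) + (∑ a, t a • Tvec a))
    (hX : gBil gm X X = 1)
    (J : Module.End ℝ (BasisIdx s → ℝ))
    (hJ : ∀ y z, gBil gm (J y) z =
        ext (bigR (fun _ _ _ _ => 0) (R2const s)) y X X z)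
    (C : Fin s → Fin s → ℝ)
    (hC : ∀ a, J (Uvec a) =
        (∑ b, C a b • Vvec b) - ∑ b, R2const s a i1 i1 b • Tvec b) :
    LinearMap.ker J =
      Submodule.span ℝ ({X} ∪ Set.range (fun a : Fin s => Vvec a) ∪ {Tvec i1}) ∧
    Module.finrank ℝ (LinearMap.ker J) = s + 2 ∧
    LinearMap.range J =
      Submodule.span ℝ
        ({w | ∃ a : Fin s, a ≠ i1 ∧ w = (∑ b, C a b • Vvec b) - Tvec a} ∪
          {w | ∃ a : Fin s, a ≠ i1 ∧ w = Vvec a}) ∧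
    Module.finrank ℝ (LinearMap.range J) = 2 * (s - 1) :=
  stmt16_general s i1 gm v t X hXdef J hJ C hC
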